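/- Let n > 1 and let K, L ⊆ ℝⁿ be strictly convex bodies that are origin-symmetric (K = −K and L = −L), with cross covariogram g = g_{K,L}. Then g^{1/n} is strictly concave on its support (i.e., for all x₀ ≠ x₁ in K + (−L) and t ∈ (0,1), g((1−t)x₀ + t x₁)^{1/n} > (1−t) g(x₀)^{1/n} + t g(x₁)^{1/n}) if and only if ∂K ∩ ∂L ≠ ∅. -/

import Mathlib

/-!
Brunn–Minkowski makes `g ^ (1 / n)` concave on `K + -L`: for `x = (1 - t) • x₀ + t • x₁` the set
`M = (1 - t) • (K ∩ (x₀ +ᵥ L)) + t • (K ∩ (x₁ +ᵥ L))` lies in `K ∩ (x +ᵥ L)`. Strict convexity of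
`K` and `L` puts `M` inside `interior K ∪ interior (x +ᵥ L)`. If `∂K` and `∂L` meet, symmetry
forbids any translate of `L` to lie in the interior of `K` or to contain `K` in its interior; since
`ℝⁿ \ {0}` is connected for `n > 1`, comparing gauges shows that two convex bodies with a common
interior point and disjoint boundaries are nested in this way, so `∂K` meets `∂(x +ᵥ L)`. Such a
point lies in `K ∩ (x +ᵥ L)` but not in the compact set `M`, so `vol M < g x` and the inequality is
strict. Conversely, if `∂K ∩ ∂L = ∅` then one body lies in the interior of the other, `g` is
constant near `0`, and strict concavity fails at `±u`.

The multiplicative Brunn–Minkowski inequality for compact convex sets is proved by induction on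
the dimension: by Fubini it reduces to a one-dimensional Prékopa–Leindler inequality for the
quasi-concave slice-volume functions, which follows from the layer-cake formula and the identity
`vol (a • S + b • T) = a * vol S + b * vol T` for bounded intervals.
-/

open MeasureTheory Set Pointwise

open Bornology Filter Topology
open scoped ENNReal

theorem Real.volume_eq_ofReal_sSup_sub_sInf {S : Set ℝ} (hS : Convex ℝ S) (hne : S.Nonempty)
    (hb : IsBounded S) : volume S = ENNReal.ofReal (sSup S - sInf S) := by
  refine le_antisymm ?_ ?_
  · rw [← Real.volume_Icc]
    exact measure_mono fun x hx => ⟨csInf_le hb.bddBelow hx, le_csSup hb.bddAbove hx⟩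
  · rw [← Real.volume_Ioo]
    refine measure_mono fun x hx => ?_
    obtain ⟨a, ha, hax⟩ := exists_lt_of_csInf_lt hne hx.1
    obtain ⟨b, hb, hxb⟩ := exists_lt_of_lt_csSup hne hx.2
    exact hS.ordConnected.out ha hb ⟨hax.le, hxb.le⟩

theorem Real.volume_smul_add_smul {S T : Set ℝ} (hS : Convex ℝ S) (hT : Convex ℝ T)
    (hSne : S.Nonempty) (hTne : T.Nonempty) (hSb : IsBounded S) (hTb : IsBounded T) {a b : ℝ}
    (ha : 0 ≤ a) (hb : 0 ≤ b) :
    volume (a • S + b • T) = ENNReal.ofReal a * volume S + ENNReal.ofReal b * volume T := by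
  have hsup : sSup (a • S + b • T) = a * sSup S + b * sSup T := by
    rw [csSup_add hSne.smul_set (hSb.smul₀ a).bddAbove hTne.smul_set (hTb.smul₀ b).bddAbove,
      Real.sSup_smul_of_nonneg ha, Real.sSup_smul_of_nonneg hb, smul_eq_mul, smul_eq_mul]
  have hinf : sInf (a • S + b • T) = a * sInf S + b * sInf T := by
    rw [csInf_add hSne.smul_set (hSb.smul₀ a).bddBelow hTne.smul_set (hTb.smul₀ b).bddBelow,
      Real.sInf_smul_of_nonneg ha, Real.sInf_smul_of_nonneg hb, smul_eq_mul, smul_eq_mul]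
  have hS' := sub_nonneg.2 (csInf_le_csSup hSne hSb.bddBelow hSb.bddAbove)
  have hT' := sub_nonneg.2 (csInf_le_csSup hTne hTb.bddBelow hTb.bddAbove)
  rw [volume_eq_ofReal_sSup_sub_sInf ((hS.smul a).add (hT.smul b))
      (hSne.smul_set.add hTne.smul_set) ((hSb.smul₀ a).add (hTb.smul₀ b)),
    volume_eq_ofReal_sSup_sub_sInf hS hSne hSb, volume_eq_ofReal_sSup_sub_sInf hT hTne hTb,
    hsup, hinf, ← ENNReal.ofReal_mul ha, ← ENNReal.ofReal_mul hb,
    ← ENNReal.ofReal_add (mul_nonneg ha hS') (mul_nonneg hb hT')]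
  ring_nf

theorem ENNReal.rpow_mul_rpow_le_add {a b : ℝ} (ha : 0 < a) (hb : 0 < b) (hab : a + b = 1)
    (x y : ℝ≥0∞) : x ^ a * y ^ b ≤ ENNReal.ofReal a * x + ENNReal.ofReal b * y := by
  rcases eq_or_ne x ⊤ with rfl | hx
  · simp [ha]
  rcases eq_or_ne y ⊤ with rfl | hy
  · simp [hb]
  rw [← ENNReal.ofReal_toReal hx, ← ENNReal.ofReal_toReal hy,
    ENNReal.ofReal_rpow_of_nonneg toReal_nonneg ha.le,
    ENNReal.ofReal_rpow_of_nonneg toReal_nonneg hb.le, ← ENNReal.ofReal_mul (by positivity),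
    ← ENNReal.ofReal_mul ha.le, ← ENNReal.ofReal_mul hb.le,
    ← ENNReal.ofReal_add (by positivity) (by positivity)]
  exact ENNReal.ofReal_le_ofReal <|
    Real.geom_mean_le_arith_mean2_weighted ha.le hb.le toReal_nonneg toReal_nonneg hab

theorem setLIntegral_Ioo_zero_eq_ofReal_mul {ψ : ℝ → ℝ≥0∞} (hψ : Measurable ψ) {κ : ℝ}
    (hκ : 0 < κ) :
    ∫⁻ t in Ioo 0 κ, ψ t = ENNReal.ofReal κ * ∫⁻ θ in Ioo 0 1, ψ (κ * θ) := by
  have h := setLIntegral_map (μ := volume) (measurableSet_Ioo (a := 0) (b := κ)) hψ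
    (measurable_const_mul κ)
  rw [Real.map_volume_mul_left hκ.ne', preimage_const_mul_Ioo₀ _ _ hκ, zero_div,
    div_self hκ.ne', Measure.restrict_smul, lintegral_smul_measure] at h
  rw [← h, smul_eq_mul, ← mul_assoc, ← ENNReal.ofReal_mul hκ.le, abs_of_pos (inv_pos.2 hκ),
    mul_inv_cancel₀ hκ.ne', ENNReal.ofReal_one, one_mul]

theorem antitone_volume_setOf_ofReal_le (φ : ℝ → ℝ≥0∞) :
    Antitone fun t : ℝ => volume {r | ENNReal.ofReal t ≤ φ r} :=
  fun _ _ hst => measure_mono fun _ hr => (ENNReal.ofReal_le_ofReal hst).trans hr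

theorem lintegral_eq_ofReal_mul_setLIntegral_volume_le {φ : ℝ → ℝ≥0∞} (hφ : Measurable φ)
    {κ : ℝ} (hκ : 0 < κ) (hφκ : ∀ r, φ r ≤ ENNReal.ofReal κ) :
    ∫⁻ r, φ r = ENNReal.ofReal κ * ∫⁻ θ in Ioo 0 1, volume {r | ENNReal.ofReal (κ * θ) ≤ φ r} := by
  have hfin r : φ r ≠ ⊤ := ne_top_of_le_ne_top ENNReal.ofReal_ne_top (hφκ r)
  calc ∫⁻ r, φ r = ∫⁻ r, ENNReal.ofReal (φ r).toReal := by simp_rw [ENNReal.ofReal_toReal (hfin _)]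
    _ = ∫⁻ t in Ioi 0, volume {r | t ≤ (φ r).toReal} :=
        lintegral_eq_lintegral_meas_le _ (ae_of_all _ fun _ => ENNReal.toReal_nonneg)
          hφ.ennreal_toReal.aemeasurable
    _ = ∫⁻ t in Ioc 0 κ, volume {r | ENNReal.ofReal t ≤ φ r} := by
        simp_rw [← ENNReal.ofReal_le_iff_le_toReal (hfin _)]
        rw [← Ioc_union_Ioi_eq_Ioi hκ.le, lintegral_union measurableSet_Ioi Ioc_disjoint_Ioi_same,
          setLIntegral_congr_fun measurableSet_Ioi (g := fun _ => 0) fun t ht => ?_,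
          lintegral_zero, add_zero]
        convert measure_empty (μ := volume)
        refine eq_empty_of_forall_notMem fun r hr => ?_
        exact (ENNReal.ofReal_lt_ofReal_iff_of_nonneg hκ.le |>.2 ht).not_ge ((hφκ r).trans' hr)
    _ = ∫⁻ t in Ioo 0 κ, volume {r | ENNReal.ofReal t ≤ φ r} :=
        setLIntegral_congr Ioo_ae_eq_Ioc.symm
    _ = _ := setLIntegral_Ioo_zero_eq_ofReal_mul (antitone_volume_setOf_ofReal_le φ).measurable hκ

theorem ofReal_mul_setLIntegral_volume_le_le_lintegral {φ : ℝ → ℝ≥0∞} (hφ : Measurable φ)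
    {κ : ℝ} (hκ : 0 < κ) :
    ENNReal.ofReal κ * ∫⁻ θ in Ioo 0 1, volume {r | ENNReal.ofReal (κ * θ) ≤ φ r}
      ≤ ∫⁻ r, φ r := by
  have hmin := lintegral_eq_ofReal_mul_setLIntegral_volume_le (hφ.min measurable_const) hκ
    fun r => min_le_right (φ r) (ENNReal.ofReal κ)
  calc _ = ∫⁻ r, min (φ r) (ENNReal.ofReal κ) := by
        rw [hmin]
        congr 1
        refine setLIntegral_congr_fun measurableSet_Ioo fun θ hθ => ?_
        congr 1
        ext r
        simp only [le_min_iff]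
        exact (and_iff_left (ENNReal.ofReal_le_ofReal (by nlinarith [hθ.2]))).symm
    _ ≤ ∫⁻ r, φ r := lintegral_mono fun r => min_le_left _ _

theorem smul_setOf_add_smul_setOf_subset {f g h : ℝ → ℝ≥0∞} {a b : ℝ} (ha : 0 ≤ a) (hb : 0 ≤ b)
    (hfgh : ∀ r r', f r ^ a * g r' ^ b ≤ h (a * r + b * r')) {u v : ℝ} (hu : 0 ≤ u) (hv : 0 ≤ v) :
    a • {r | ENNReal.ofReal u ≤ f r} + b • {r | ENNReal.ofReal v ≤ g r}
      ⊆ {r | ENNReal.ofReal (u ^ a * v ^ b) ≤ h r} := by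
  rintro _ ⟨_, ⟨r, hr, rfl⟩, _, ⟨r', hr', rfl⟩, rfl⟩
  calc ENNReal.ofReal (u ^ a * v ^ b) = ENNReal.ofReal u ^ a * ENNReal.ofReal v ^ b := by
        rw [ENNReal.ofReal_mul (by positivity), ENNReal.ofReal_rpow_of_nonneg hu ha,
          ENNReal.ofReal_rpow_of_nonneg hv hb]
    _ ≤ f r ^ a * g r' ^ b := by gcongr <;> assumption
    _ ≤ h (a • r + b • r') := hfgh r r'

theorem QuasiconcaveOn.volume_smul_add_smul_le {f g h : ℝ → ℝ≥0∞}
    (hfq : QuasiconcaveOn ℝ univ f) (hgq : QuasiconcaveOn ℝ univ g)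
    (hfb : IsBounded (Function.support f)) (hgb : IsBounded (Function.support g))
    {a b : ℝ} (ha : 0 ≤ a) (hb : 0 ≤ b) (hfgh : ∀ r r', f r ^ a * g r' ^ b ≤ h (a * r + b * r'))
    {u v : ℝ} (hu : 0 < u) (hv : 0 < v) (huf : ENNReal.ofReal u < ⨆ r, f r)
    (hvg : ENNReal.ofReal v < ⨆ r, g r) :
    ENNReal.ofReal a * volume {r | ENNReal.ofReal u ≤ f r}
        + ENNReal.ofReal b * volume {r | ENNReal.ofReal v ≤ g r}
      ≤ volume {r | ENNReal.ofReal (u ^ a * v ^ b) ≤ h r} := by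
  have hconv {φ : ℝ → ℝ≥0∞} (hφ : QuasiconcaveOn ℝ univ φ) (c : ℝ≥0∞) :
      Convex ℝ {r | c ≤ φ r} := by simpa using hφ c
  have hne {φ : ℝ → ℝ≥0∞} {c : ℝ≥0∞} (hc : c < ⨆ r, φ r) : {r | c ≤ φ r}.Nonempty :=
    let ⟨r, hr⟩ := lt_iSup_iff.1 hc; ⟨r, hr.le⟩
  have hbdd {φ : ℝ → ℝ≥0∞} (hφ : IsBounded (Function.support φ)) {w : ℝ} (hw : 0 < w) :
      IsBounded {r | ENNReal.ofReal w ≤ φ r} :=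
    hφ.subset fun r hr => (ENNReal.ofReal_pos.2 hw).trans_le hr |>.ne'
  rw [← Real.volume_smul_add_smul (hconv hfq _) (hconv hgq _) (hne huf) (hne hvg) (hbdd hfb hu)
    (hbdd hgb hv) ha hb]
  exact measure_mono (smul_setOf_add_smul_setOf_subset ha hb hfgh hu.le hv.le)

theorem measurable_volume_setOf_ofReal_mul_le (φ : ℝ → ℝ≥0∞) {κ : ℝ} (hκ : 0 ≤ κ) :
    Measurable fun θ => volume {r | ENNReal.ofReal (κ * θ) ≤ φ r} :=
  ((antitone_volume_setOf_ofReal_le φ).comp_monotone (monotone_mul_left_of_nonneg hκ)).measurable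

theorem QuasiconcaveOn.setLIntegral_volume_smul_add_smul_le {f g h : ℝ → ℝ≥0∞}
    (hfq : QuasiconcaveOn ℝ univ f) (hgq : QuasiconcaveOn ℝ univ g)
    (hfb : IsBounded (Function.support f)) (hgb : IsBounded (Function.support g)) {a b : ℝ}
    (ha : 0 ≤ a) (hb : 0 ≤ b) (hab : a + b = 1)
    (hfgh : ∀ r r', f r ^ a * g r' ^ b ≤ h (a * r + b * r')) {F G : ℝ} (hF : 0 < F) (hG : 0 < G)
    (hFf : ENNReal.ofReal F ≤ ⨆ r, f r) (hGg : ENNReal.ofReal G ≤ ⨆ r, g r) :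
    ENNReal.ofReal a * (∫⁻ θ in Ioo 0 1, volume {r | ENNReal.ofReal (F * θ) ≤ f r})
        + ENNReal.ofReal b * ∫⁻ θ in Ioo 0 1, volume {r | ENNReal.ofReal (G * θ) ≤ g r}
      ≤ ∫⁻ θ in Ioo 0 1, volume {r | ENNReal.ofReal (F ^ a * G ^ b * θ) ≤ h r} := by
  have hmf := measurable_volume_setOf_ofReal_mul_le f hF.le
  rw [← lintegral_const_mul _ hmf,
    ← lintegral_const_mul _ (measurable_volume_setOf_ofReal_mul_le g hG.le),
    ← lintegral_add_left (hmf.const_mul _)]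
  refine setLIntegral_mono (measurable_volume_setOf_ofReal_mul_le h (by positivity))
    fun θ hθ => ?_
  have hlevel := hfq.volume_smul_add_smul_le hgq hfb hgb ha hb hfgh (mul_pos hF hθ.1)
    (mul_pos hG hθ.1)
    (((ENNReal.ofReal_lt_ofReal_iff hF).2 (mul_lt_of_lt_one_right hF hθ.2)).trans_le hFf)
    (((ENNReal.ofReal_lt_ofReal_iff hG).2 (mul_lt_of_lt_one_right hG hθ.2)).trans_le hGg)
  rwa [Real.mul_rpow hF.le hθ.1.le, Real.mul_rpow hG.le hθ.1.le, mul_mul_mul_comm,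
    ← Real.rpow_add hθ.1, hab, Real.rpow_one] at hlevel

theorem lintegral_rpow_mul_rpow_le_lintegral_of_quasiconcaveOn {f g h : ℝ → ℝ≥0∞}
    (hf : Measurable f) (hg : Measurable g) (hh : Measurable h)
    (hfq : QuasiconcaveOn ℝ univ f) (hgq : QuasiconcaveOn ℝ univ g)
    (hfb : IsBounded (Function.support f)) (hgb : IsBounded (Function.support g))
    (hfs : ⨆ r, f r ≠ ⊤) (hgs : ⨆ r, g r ≠ ⊤) {a b : ℝ} (ha : 0 < a) (hb : 0 < b)
    (hab : a + b = 1) (hfgh : ∀ r r', f r ^ a * g r' ^ b ≤ h (a * r + b * r')) :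
    (∫⁻ r, f r) ^ a * (∫⁻ r, g r) ^ b ≤ ∫⁻ r, h r := by
  rcases eq_or_ne (⨆ r, f r) 0 with hf0 | hf0
  · simp [ENNReal.iSup_eq_zero.1 hf0, ENNReal.zero_rpow_of_pos ha]
  rcases eq_or_ne (⨆ r, g r) 0 with hg0 | hg0
  · simp [ENNReal.iSup_eq_zero.1 hg0, ENNReal.zero_rpow_of_pos hb]
  obtain ⟨F, hF, hFf⟩ : ∃ F : ℝ, 0 < F ∧ ENNReal.ofReal F = ⨆ r, f r :=
    ⟨_, ENNReal.toReal_pos hf0 hfs, ENNReal.ofReal_toReal hfs⟩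
  obtain ⟨G, hG, hGg⟩ : ∃ G : ℝ, 0 < G ∧ ENNReal.ofReal G = ⨆ r, g r :=
    ⟨_, ENNReal.toReal_pos hg0 hgs, ENNReal.ofReal_toReal hgs⟩
  set c := F ^ a * G ^ b
  set Λ : (ℝ → ℝ≥0∞) → ℝ → ℝ≥0∞ :=
    fun φ κ => ∫⁻ θ in Ioo 0 1, volume {r | ENNReal.ofReal (κ * θ) ≤ φ r}
  have hfΛ : ∫⁻ r, f r = ENNReal.ofReal F * Λ f F :=
    lintegral_eq_ofReal_mul_setLIntegral_volume_le hf hF fun r => hFf ▸ le_iSup f r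
  have hgΛ : ∫⁻ r, g r = ENNReal.ofReal G * Λ g G :=
    lintegral_eq_ofReal_mul_setLIntegral_volume_le hg hG fun r => hGg ▸ le_iSup g r
  calc (∫⁻ r, f r) ^ a * (∫⁻ r, g r) ^ b
      = ENNReal.ofReal c * (Λ f F ^ a * Λ g G ^ b) := by
        rw [hfΛ, hgΛ, ENNReal.mul_rpow_of_nonneg _ _ ha.le, ENNReal.mul_rpow_of_nonneg _ _ hb.le,
          ENNReal.ofReal_mul (by positivity), ENNReal.ofReal_rpow_of_pos hF,
          ENNReal.ofReal_rpow_of_pos hG]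
        ring
    _ ≤ ENNReal.ofReal c * (ENNReal.ofReal a * Λ f F + ENNReal.ofReal b * Λ g G) := by
        gcongr
        exact ENNReal.rpow_mul_rpow_le_add ha hb hab _ _
    _ ≤ ENNReal.ofReal c * Λ h c := by
        gcongr
        exact hfq.setLIntegral_volume_smul_add_smul_le hgq hfb hgb ha.le hb.le hab hfgh hF hG
          hFf.le hGg.le
    _ ≤ ∫⁻ r, h r := ofReal_mul_setLIntegral_volume_le_le_lintegral hh (by positivity)

def SatisfiesBrunnMinkowski {X : Type*} [AddCommGroup X] [Module ℝ X] [TopologicalSpace X]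
    [MeasurableSpace X] (μ : Measure X) : Prop :=
  ∀ ⦃A B : Set X⦄, IsCompact A → IsCompact B → Convex ℝ A → Convex ℝ B →
    ∀ ⦃a b : ℝ⦄, 0 < a → 0 < b → a + b = 1 → μ A ^ a * μ B ^ b ≤ μ (a • A + b • B)

section Slice

theorem IsCompact.slice {V : Type*} [TopologicalSpace V] [T2Space V] {A : Set (ℝ × V)}
    (hA : IsCompact A) (r : ℝ) : IsCompact (Prod.mk r ⁻¹' A) :=
  (hA.image continuous_snd).of_isClosed_subset (hA.isClosed.preimage (Continuous.prodMk_right r))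
    fun x hx => ⟨(r, x), hx, rfl⟩

theorem IsCompact.isBounded_support_measure_slice {V : Type*} [TopologicalSpace V]
    [MeasurableSpace V] {ν : Measure V} {A : Set (ℝ × V)} (hA : IsCompact A) :
    IsBounded (Function.support fun r => ν (Prod.mk r ⁻¹' A)) :=
  (hA.image continuous_fst).isBounded.subset fun r hr =>
    let ⟨x, hx⟩ := nonempty_of_measure_ne_zero hr
    ⟨(r, x), hx, rfl⟩

theorem IsCompact.iSup_measure_slice_ne_top {V : Type*} [TopologicalSpace V] [MeasurableSpace V]
    {ν : Measure V} [IsFiniteMeasureOnCompacts ν] {A : Set (ℝ × V)} (hA : IsCompact A) :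
    ⨆ r, ν (Prod.mk r ⁻¹' A) ≠ ⊤ :=
  ne_top_of_le_ne_top (hA.image continuous_snd).measure_lt_top.ne
    (iSup_le fun r => measure_mono fun x hx => ⟨(r, x), hx, rfl⟩)

variable {V : Type*} [NormedAddCommGroup V] [NormedSpace ℝ V]

theorem Convex.slice {A : Set (ℝ × V)} (hA : Convex ℝ A) (r : ℝ) :
    Convex ℝ (Prod.mk r ⁻¹' A) := by
  intro x hx y hy a b ha hb hab
  simpa [← add_mul, hab] using hA hx hy ha hb hab

theorem smul_slice_add_smul_slice_subset (A B : Set (ℝ × V)) (a b r r' : ℝ) :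
    a • (Prod.mk r ⁻¹' A) + b • (Prod.mk r' ⁻¹' B)
      ⊆ Prod.mk (a * r + b * r') ⁻¹' (a • A + b • B) := by
  rintro _ ⟨_, ⟨x, hx, rfl⟩, _, ⟨y, hy, rfl⟩, rfl⟩
  exact ⟨_, ⟨(r, x), hx, rfl⟩, _, ⟨(r', y), hy, rfl⟩, by simp⟩

variable [MeasurableSpace V] {ν : Measure V}

theorem SatisfiesBrunnMinkowski.slice_rpow_mul_rpow_le (hν : SatisfiesBrunnMinkowski ν)
    {A B : Set (ℝ × V)} (hA : IsCompact A) (hB : IsCompact B) (hAc : Convex ℝ A)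
    (hBc : Convex ℝ B) {a b : ℝ} (ha : 0 < a) (hb : 0 < b) (hab : a + b = 1) (r r' : ℝ) :
    ν (Prod.mk r ⁻¹' A) ^ a * ν (Prod.mk r' ⁻¹' B) ^ b
      ≤ ν (Prod.mk (a * r + b * r') ⁻¹' (a • A + b • B)) :=
  (hν (hA.slice r) (hB.slice r') (hAc.slice r) (hBc.slice r') ha hb hab).trans
    (measure_mono (smul_slice_add_smul_slice_subset A B a b r r'))

theorem SatisfiesBrunnMinkowski.quasiconcaveOn_measure_slice (hν : SatisfiesBrunnMinkowski ν)
    {A : Set (ℝ × V)} (hA : IsCompact A) (hAc : Convex ℝ A) :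
    QuasiconcaveOn ℝ univ fun r => ν (Prod.mk r ⁻¹' A) := by
  intro c
  simp only [mem_univ, true_and]
  refine convex_iff_forall_pos.2 fun r hr r' hr' a b ha hb hab => ?_
  have h := hν.slice_rpow_mul_rpow_le hA hA hAc hAc ha hb hab r r'
  rw [← hAc.add_smul ha.le hb.le, hab, one_smul] at h
  calc c = c ^ a * c ^ b := by
        rw [← ENNReal.rpow_add_of_nonneg _ _ ha.le hb.le, hab, ENNReal.rpow_one]
    _ ≤ ν (Prod.mk r ⁻¹' A) ^ a * ν (Prod.mk r' ⁻¹' A) ^ b := by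
        gcongr
        exacts [hr, hr']
    _ ≤ _ := h

theorem SatisfiesBrunnMinkowski.prod [BorelSpace V] [SecondCountableTopology V] [SigmaFinite ν]
    [IsFiniteMeasureOnCompacts ν] (hν : SatisfiesBrunnMinkowski ν) :
    SatisfiesBrunnMinkowski ((volume : Measure ℝ).prod ν) := by
  intro A B hA hB hAc hBc a b ha hb hab
  have hC : IsCompact (a • A + b • B) := (hA.smul a).add (hB.smul b)
  rw [Measure.prod_apply hA.measurableSet, Measure.prod_apply hB.measurableSet,
    Measure.prod_apply hC.measurableSet]
  exact lintegral_rpow_mul_rpow_le_lintegral_of_quasiconcaveOn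
    (measurable_measure_prodMk_left hA.measurableSet)
    (measurable_measure_prodMk_left hB.measurableSet)
    (measurable_measure_prodMk_left hC.measurableSet)
    (hν.quasiconcaveOn_measure_slice hA hAc) (hν.quasiconcaveOn_measure_slice hB hBc)
    hA.isBounded_support_measure_slice hB.isBounded_support_measure_slice
    hA.iSup_measure_slice_ne_top hB.iSup_measure_slice_ne_top ha hb hab
    (hν.slice_rpow_mul_rpow_le hA hB hAc hBc ha hb hab)

end Slice

theorem SatisfiesBrunnMinkowski.map {X Y : Type*} [NormedAddCommGroup X] [NormedSpace ℝ X]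
    [MeasurableSpace X] [BorelSpace X] [NormedAddCommGroup Y] [NormedSpace ℝ Y]
    [MeasurableSpace Y] [BorelSpace Y] {μ : Measure X} (hμ : SatisfiesBrunnMinkowski μ)
    (e : X ≃L[ℝ] Y) : SatisfiesBrunnMinkowski (μ.map e) := by
  intro A B hA hB hAc hBc a b ha hb hab
  have hmap {S : Set Y} (hS : IsCompact S) : μ.map e S = μ (e.symm '' S) := by
    rw [Measure.map_apply e.continuous.measurable hS.measurableSet, e.image_symm_eq_preimage]
  rw [hmap hA, hmap hB, hmap ((hA.smul a).add (hB.smul b)), image_add, image_smul_set,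
    image_smul_set]
  exact hμ (hA.image e.symm.continuous) (hB.image e.symm.continuous)
    (hAc.linear_image (e.symm : Y →ₗ[ℝ] X)) (hBc.linear_image (e.symm : Y →ₗ[ℝ] X)) ha hb hab

theorem satisfiesBrunnMinkowski_volume_pi :
    ∀ m : ℕ, SatisfiesBrunnMinkowski (volume : Measure (Fin m → ℝ))
  | 0 => by
    intro A B _ _ _ _ a b ha hb hab
    rcases A.eq_empty_or_nonempty with rfl | hA
    · simp [ENNReal.zero_rpow_of_pos ha]
    rcases B.eq_empty_or_nonempty with rfl | hB
    · simp [ENNReal.zero_rpow_of_pos hb]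
    rw [(hA.smul_set (a := a)).add (hB.smul_set (a := b)) |>.eq_univ, hA.eq_univ, hB.eq_univ,
      ← ENNReal.rpow_add_of_nonneg _ _ ha.le hb.le, hab, ENNReal.rpow_one]
  | m + 1 => by
    have h := (satisfiesBrunnMinkowski_volume_pi m).prod.map
      (Fin.consLinearEquiv ℝ fun _ : Fin (m + 1) => ℝ).toContinuousLinearEquiv
    have hcons : ⇑(Fin.consLinearEquiv ℝ fun _ : Fin (m + 1) => ℝ).toContinuousLinearEquiv
        = (MeasurableEquiv.piFinSuccAbove (fun _ : Fin (m + 1) => ℝ) 0).symm := by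
      funext x
      simp only [LinearEquiv.coe_toContinuousLinearEquiv',
        MeasurableEquiv.piFinSuccAbove_symm_apply, Fin.insertNthEquiv_zero]
      rfl
    rwa [hcons, ← Measure.volume_eq_prod,
      (volume_preserving_piFinSuccAbove (fun _ : Fin (m + 1) => ℝ) 0).symm.map_eq] at h

theorem satisfiesBrunnMinkowski_volume_euclideanSpace (n : ℕ) :
    SatisfiesBrunnMinkowski (volume : Measure (EuclideanSpace ℝ (Fin n))) := by
  have h := (satisfiesBrunnMinkowski_volume_pi n).map (EuclideanSpace.equiv (Fin n) ℝ).symm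
  rwa [show ⇑(EuclideanSpace.equiv (Fin n) ℝ).symm = WithLp.toLp 2 from rfl,
    (PiLp.volume_preserving_toLp (Fin n)).map_eq] at h

theorem measure_le_measure_add_left {G : Type*} [AddGroup G] [MeasurableSpace G] (μ : Measure G)
    [μ.IsAddLeftInvariant] {S : Set G} (hS : S.Nonempty) (T : Set G) : μ T ≤ μ (S + T) := by
  obtain ⟨p, hp⟩ := hS
  rw [← measure_vadd μ p T]
  exact measure_mono <| by rintro _ ⟨t, ht, rfl⟩; exact add_mem_add hp ht

section Additive

open Module

variable {E : Type*} [NormedAddCommGroup E] [NormedSpace ℝ E] [FiniteDimensional ℝ E]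
  [MeasurableSpace E] [BorelSpace E]

theorem toReal_addHaar_smul_rpow_inv_finrank (μ : Measure E) [μ.IsAddHaarMeasure]
    (hE : 0 < finrank ℝ E) {r : ℝ} (hr : 0 ≤ r) (S : Set E) :
    (μ (r • S)).toReal ^ (finrank ℝ E : ℝ)⁻¹ = r * (μ S).toReal ^ (finrank ℝ E : ℝ)⁻¹ := by
  rw [Measure.addHaar_smul, ENNReal.toReal_mul, ENNReal.toReal_ofReal (abs_nonneg _),
    abs_of_nonneg (pow_nonneg hr _), Real.mul_rpow (pow_nonneg hr _) ENNReal.toReal_nonneg,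
    Real.pow_rpow_inv_natCast hr hE.ne']

theorem addHaar_inv_toReal_rpow_smul_eq_one (μ : Measure E) [μ.IsAddHaarMeasure]
    (hE : 0 < finrank ℝ E) {S : Set E} (hS : 0 < (μ S).toReal ^ (finrank ℝ E : ℝ)⁻¹) :
    μ (((μ S).toReal ^ (finrank ℝ E : ℝ)⁻¹)⁻¹ • S) = 1 := by
  have h := toReal_addHaar_smul_rpow_inv_finrank μ hE (inv_nonneg.2 hS.le) S
  rw [inv_mul_cancel₀ hS.ne'] at h
  rw [← ENNReal.toReal_eq_one_iff, ← Real.rpow_inv_natCast_pow ENNReal.toReal_nonneg hE.ne', h,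
    one_pow]

variable {μ : Measure E} [μ.IsAddHaarMeasure]

theorem SatisfiesBrunnMinkowski.add_rpow_inv_finrank_le (hμ : SatisfiesBrunnMinkowski μ)
    {A B : Set E} (hA : IsCompact A) (hB : IsCompact B) (hAc : Convex ℝ A) (hBc : Convex ℝ B)
    (hAne : A.Nonempty) (hBne : B.Nonempty) {a b : ℝ} (ha : 0 < a) (hb : 0 < b)
    (hab : a + b = 1) :
    a * (μ A).toReal ^ (finrank ℝ E : ℝ)⁻¹ + b * (μ B).toReal ^ (finrank ℝ E : ℝ)⁻¹
      ≤ (μ (a • A + b • B)).toReal ^ (finrank ℝ E : ℝ)⁻¹ := by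
  set n := finrank ℝ E
  rcases Nat.eq_zero_or_pos n with hn | hn
  · simp [hn, hab]
  set N : Set E → ℝ := fun S => (μ S).toReal ^ (n : ℝ)⁻¹
  show a * N A + b * N B ≤ N (a • A + b • B)
  have hNsmul {r : ℝ} (hr : 0 ≤ r) (S : Set E) : N (r • S) = r * N S :=
    toReal_addHaar_smul_rpow_inv_finrank μ hn hr S
  have hM : IsCompact (a • A + b • B) := (hA.smul a).add (hB.smul b)
  have hNle {S : Set E} (hS : μ S ≤ μ (a • A + b • B)) : N S ≤ N (a • A + b • B) :=
    Real.rpow_le_rpow ENNReal.toReal_nonneg (ENNReal.toReal_mono hM.measure_lt_top.ne hS)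
      (by positivity)
  rcases (show 0 ≤ N A by positivity).eq_or_lt with hA0 | hApos
  · rw [← hA0, mul_zero, zero_add, ← hNsmul hb.le]
    exact hNle (measure_le_measure_add_left μ hAne.smul_set _)
  rcases (show 0 ≤ N B by positivity).eq_or_lt with hB0 | hBpos
  · rw [← hB0, mul_zero, add_zero, ← hNsmul ha.le]
    exact hNle ((measure_le_measure_add_left μ hBne.smul_set _).trans_eq (by rw [add_comm]))
  -- rescale `A` and `B` to unit volume and apply the multiplicative inequality
  set c := a * N A + b * N B
  have hc : 0 < c := by positivity
  have hBM := hμ (hA.smul (N A)⁻¹) (hB.smul (N B)⁻¹) (hAc.smul _) (hBc.smul _)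
    (div_pos (mul_pos ha hApos) hc) (div_pos (mul_pos hb hBpos) hc)
    (by rw [← add_div, div_self hc.ne'])
  rw [addHaar_inv_toReal_rpow_smul_eq_one μ hn hApos,
    addHaar_inv_toReal_rpow_smul_eq_one μ hn hBpos, ENNReal.one_rpow, ENNReal.one_rpow,
    one_mul] at hBM
  have hset : c • ((a * N A / c) • (N A)⁻¹ • A + (b * N B / c) • (N B)⁻¹ • B) = a • A + b • B := by
    rw [smul_add, smul_smul, smul_smul, smul_smul, smul_smul]
    congr 2 <;> field_simp
  calc c = c * 1 := (mul_one c).symm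
    _ ≤ c * N ((a * N A / c) • (N A)⁻¹ • A + (b * N B / c) • (N B)⁻¹ • B) := by
        gcongr
        refine Real.one_le_rpow ?_ (by positivity)
        exact ENNReal.toReal_one ▸ ENNReal.toReal_mono
          (((hA.smul _).smul _).add ((hB.smul _).smul _)).measure_lt_top.ne hBM
    _ = N (a • A + b • B) := by rw [← hNsmul hc.le, hset]

end Additive

theorem frontier_vadd {α G : Type*} [TopologicalSpace α] [AddGroup G] [AddAction G α]
    [ContinuousConstVAdd G α] (x : G) (S : Set α) : frontier (x +ᵥ S) = x +ᵥ frontier S := by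
  rw [frontier, frontier, closure_vadd, interior_vadd, vadd_set_sdiff]

theorem mem_add_neg_iff_inter_vadd_nonempty {G : Type*} [AddCommGroup G] {K L : Set G} {x : G} :
    x ∈ K + -L ↔ (K ∩ (x +ᵥ L)).Nonempty := by
  constructor
  · rintro ⟨k, hk, l, hl, rfl⟩
    exact ⟨k, hk, -l, hl, by simp [vadd_eq_add]⟩
  · rintro ⟨k, hk, l, hl, rfl⟩
    exact ⟨x +ᵥ l, hk, -l, Set.neg_mem_neg.2 hl, by simp [vadd_eq_add]⟩

theorem interior_neg {G : Type*} [TopologicalSpace G] [InvolutiveNeg G] [ContinuousNeg G]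
    (S : Set G) : interior (-S) = -interior S := by
  simpa [image_neg_eq_neg] using ((Homeomorph.neg G).image_interior S).symm

section Geometry

variable {E : Type*} [NormedAddCommGroup E] [NormedSpace ℝ E]

theorem Convex.zero_mem_interior_of_eq_neg {K : Set E} (hK : Convex ℝ K) (hKs : K = -K)
    (hKi : (interior K).Nonempty) : (0 : E) ∈ interior K := by
  obtain ⟨w, hw⟩ := hKi
  have hw' : -w ∈ interior K := by rwa [hKs, interior_neg, Set.neg_mem_neg]
  simpa using hK.interior hw hw' (a := 1 / 2) (b := 1 / 2) (by norm_num) (by norm_num)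
    (by norm_num)

theorem subset_interior_of_gauge_lt {P Q : Set E} (hQ : Convex ℝ Q) (hQ0 : Q ∈ 𝓝 0)
    (h : ∀ x ∈ ({0}ᶜ : Set E), gauge Q x < gauge P x) : P ⊆ interior Q := by
  intro x hx
  rcases eq_or_ne x 0 with rfl | hx0
  · exact mem_interior_iff_mem_nhds.2 hQ0
  · exact (gauge_lt_one_iff_mem_interior hQ hQ0).1 ((h x hx0).trans_le (gauge_le_one_of_mem hx))

theorem subset_interior_or_subset_interior_of_mem_nhds_zero (hE : 1 < Module.rank ℝ E)
    {P Q : Set E} (hP : Convex ℝ P) (hQ : Convex ℝ Q) (hPb : IsBounded P)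
    (hP0 : P ∈ 𝓝 0) (hQ0 : Q ∈ 𝓝 0) (hPQ : Disjoint (frontier P) (frontier Q)) :
    P ⊆ interior Q ∨ Q ⊆ interior P := by
  -- Where the gauges agree, a rescaling gives a common boundary point; so they never agree on the
  -- connected set `{0}ᶜ`, and one of them is smaller everywhere.
  have hne : ∀ x ∈ ({0}ᶜ : Set E), gauge P x ≠ gauge Q x := by
    intro x hx heq
    have hpos : 0 < gauge P x :=
      (gauge_pos (absorbent_nhds_zero hP0) ((NormedSpace.isVonNBounded_iff ℝ).2 hPb)).2 hx
    have hfr {S : Set E} (hS : Convex ℝ S) (hS0 : S ∈ 𝓝 0) (hSx : gauge S x = gauge P x) :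
        (gauge P x)⁻¹ • x ∈ frontier S := by
      rw [← gauge_eq_one_iff_mem_frontier hS hS0, gauge_smul_of_nonneg (inv_nonneg.2 hpos.le),
        smul_eq_mul, hSx, inv_mul_cancel₀ hpos.ne']
    exact hPQ.ne_of_mem (hfr hP hP0 rfl) (hfr hQ hQ0 heq.symm) rfl
  have hconn := (isConnected_compl_singleton_of_one_lt_rank hE (0 : E)).isPreconnected
  by_cases h : ∀ x ∈ ({0}ᶜ : Set E), gauge Q x < gauge P x
  · exact Or.inl (subset_interior_of_gauge_lt hQ hQ0 h)
  push Not at h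
  obtain ⟨x, hx, hxle⟩ := h
  refine Or.inr (subset_interior_of_gauge_lt hP hP0 fun y hy => lt_of_not_ge fun hyle => ?_)
  obtain ⟨z, hz, hzeq⟩ := hconn.intermediate_value₂ hx hy (continuous_gauge hP hP0).continuousOn
    (continuous_gauge hQ hQ0).continuousOn hxle hyle
  exact hne z hz hzeq

theorem subset_interior_or_subset_interior_of_disjoint_frontier (hE : 1 < Module.rank ℝ E)
    {P Q : Set E} (hP : Convex ℝ P) (hQ : Convex ℝ Q) (hPb : IsBounded P) {z : E}
    (hzP : z ∈ interior P) (hzQ : z ∈ interior Q) (hPQ : Disjoint (frontier P) (frontier Q)) :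
    P ⊆ interior Q ∨ Q ⊆ interior P := by
  have h0 {S : Set E} (hz : z ∈ interior S) : -z +ᵥ S ∈ 𝓝 0 := by
    rw [← mem_interior_iff_mem_nhds, interior_vadd, mem_vadd_set_iff_neg_vadd_mem]
    simpa using hz
  have key := subset_interior_or_subset_interior_of_mem_nhds_zero hE (hP.vadd (-z)) (hQ.vadd (-z))
    (hPb.vadd _) (h0 hzP) (h0 hzQ) (by rwa [frontier_vadd, frontier_vadd, disjoint_vadd_set])
  simpa only [interior_vadd, vadd_set_subset_vadd_set_iff] using key

theorem not_vadd_subset_interior {K L : Set E} (hK : Convex ℝ K) (hKs : K = -K) (hL : IsClosed L)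
    (hLs : L = -L) (hKL : (frontier K ∩ frontier L).Nonempty) (x : E) :
    ¬ x +ᵥ L ⊆ interior K := by
  intro hsub
  -- by symmetry `-x +ᵥ L ⊆ interior K` as well, and convexity then puts `L` inside `interior K`
  have hsub' : -x +ᵥ L ⊆ interior K := by
    rintro _ ⟨l, hl, rfl⟩
    have h : x + -l ∈ interior K := hsub ⟨-l, by rw [hLs] at hl; exact hl, rfl⟩
    rw [hKs, interior_neg, ← Set.neg_mem_neg, neg_neg, neg_add_rev, neg_neg, add_comm] at h
    exact h
  obtain ⟨p, hpK, hpL⟩ := hKL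
  have hp : p ∈ interior K := by
    have hpL' := hL.frontier_subset hpL
    have hmid : (1 / 2 : ℝ) • (x +ᵥ p) + (1 / 2 : ℝ) • (-x +ᵥ p) = p := by
      rw [vadd_eq_add, vadd_eq_add]
      module
    simpa only [hmid] using hK.interior (hsub ⟨p, hpL', rfl⟩) (hsub' ⟨p, hpL', rfl⟩)
      (a := 1 / 2) (b := 1 / 2) (by norm_num) (by norm_num) (by norm_num)
  exact disjoint_interior_frontier.ne_of_mem hp hpK rfl

theorem frontier_inter_frontier_vadd_nonempty (hE : 1 < Module.rank ℝ E) {K L : Set E}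
    (hKc : IsCompact K) (hK : Convex ℝ K) (hKs : K = -K) (hLc : IsCompact L) (hL : Convex ℝ L)
    (hLs : L = -L) (hKL : (frontier K ∩ frontier L).Nonempty) {x z : E} (hzK : z ∈ interior K)
    (hzL : z ∈ interior (x +ᵥ L)) : (frontier K ∩ frontier (x +ᵥ L)).Nonempty := by
  by_contra h
  rcases subset_interior_or_subset_interior_of_disjoint_frontier hE hK (hL.vadd x) hKc.isBounded
    hzK hzL (disjoint_iff_inter_eq_empty.2 (not_nonempty_iff_eq_empty.1 h)) with hsub | hsub
  · refine not_vadd_subset_interior hL hLs hKc.isClosed hKs (by rwa [inter_comm]) (-x) ?_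
    rwa [interior_vadd, subset_vadd_set_iff] at hsub
  · exact not_vadd_subset_interior hK hKs hLc.isClosed hLs hKL x hsub

end Geometry

theorem IsCompact.eventually_vadd_subset {G : Type*} [TopologicalSpace G] [AddMonoid G]
    [ContinuousAdd G] {K U : Set G} (hK : IsCompact K) (hU : IsOpen U) (hKU : K ⊆ U) :
    ∀ᶠ y in 𝓝 (0 : G), y +ᵥ K ⊆ U := by
  obtain ⟨V, hV, hVK⟩ := compact_open_separated_add_left hK hU hKU
  filter_upwards [hV] with y hy
  rintro _ ⟨k, hk, rfl⟩
  exact hVK (add_mem_add hy hk)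

theorem eventually_measure_inter_vadd_eq {G : Type*} [TopologicalSpace G] [AddGroup G]
    [IsTopologicalAddGroup G] [MeasurableSpace G] (μ : Measure G) [μ.IsAddLeftInvariant]
    {K L : Set G} (hKc : IsCompact K) (hLc : IsCompact L) (h : K ⊆ interior L ∨ L ⊆ interior K) :
    ∀ᶠ y in 𝓝 (0 : G), μ (K ∩ (y +ᵥ L)) = μ (K ∩ L) := by
  rcases h with hKL | hLK
  · filter_upwards [(continuous_neg.tendsto' 0 0 neg_zero).eventually
      (hKc.eventually_vadd_subset isOpen_interior hKL)] with y hy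
    rw [inter_eq_left.2 (subset_vadd_set_iff.2 (hy.trans interior_subset)),
      inter_eq_left.2 (hKL.trans interior_subset)]
  · filter_upwards [hLc.eventually_vadd_subset isOpen_interior hLK] with y hy
    rw [inter_eq_right.2 (hy.trans interior_subset), inter_eq_right.2 (hLK.trans interior_subset),
      measure_vadd]

section Covariogram

variable {E : Type*} [NormedAddCommGroup E] [NormedSpace ℝ E]

theorem strictConcaveOn_iff_forall_Ioo {s : Set E} (hs : Convex ℝ s) {f : E → ℝ} :
    StrictConcaveOn ℝ s f ↔ ∀ x ∈ s, ∀ y ∈ s, x ≠ y → ∀ t ∈ Ioo (0 : ℝ) 1,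
      (1 - t) * f x + t * f y < f ((1 - t) • x + t • y) := by
  refine ⟨fun h x hx y hy hxy t ht => h.2 hx hy hxy (sub_pos.2 ht.2) ht.1 (sub_add_cancel 1 t),
    fun h => ⟨hs, fun x hx y hy hxy a b ha hb hab => ?_⟩⟩
  obtain rfl : a = 1 - b := by linarith
  exact h x hx y hy hxy b ⟨hb, by linarith⟩

theorem StrictConcaveOn.not_eventually_eq [Nontrivial E] {s : Set E} {f : E → ℝ}
    (hf : StrictConcaveOn ℝ s f) {x : E} (hs : s ∈ 𝓝 x) : ¬ ∀ᶠ y in 𝓝 x, f y = f x := by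
  intro h
  have hev : ∀ᶠ y in 𝓝 x, y ∈ s ∧ f y = f x := (show ∀ᶠ y in 𝓝 x, y ∈ s from hs).and h
  have hrefl : Tendsto (fun y => (2 : ℝ) • x - y) (𝓝 x) (𝓝 x) :=
    (continuous_const.sub continuous_id).tendsto' x x (by simp [two_smul])
  obtain ⟨y, ⟨⟨hys, hfy⟩, hy's, hfy'⟩, hyx⟩ :=
    (((hev.and (hrefl.eventually hev)).filter_mono nhdsWithin_le_nhds).and
      (self_mem_nhdsWithin (s := {x}ᶜ))).exists
  have hne : y ≠ (2 : ℝ) • x - y := fun hy => hyx <|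
    smul_right_injective E (two_ne_zero : (2 : ℝ) ≠ 0) (by linear_combination (norm := module) hy)
  have hlt := hf.2 hys hy's hne (by norm_num : (0 : ℝ) < 1 / 2) (by norm_num : (0 : ℝ) < 1 / 2)
    (by norm_num)
  have hmid : (1 / 2 : ℝ) • y + (1 / 2 : ℝ) • ((2 : ℝ) • x - y) = x := by module
  rw [hmid, hfy, hfy', smul_eq_mul] at hlt
  linarith

theorem Convex.inter_interior_nonempty_of_mem {C U : Set E} (hC : Convex ℝ C)
    (hCi : (interior C).Nonempty) (hU : IsOpen U) {p : E} (hpC : p ∈ C) (hpU : p ∈ U) :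
    (U ∩ interior C).Nonempty := by
  have hp : p ∈ closure (interior C) := by
    rw [hC.closure_interior_eq_closure_of_nonempty_interior hCi]
    exact subset_closure hpC
  exact mem_closure_iff.1 hp U hU hpU

theorem interior_inter_interior_vadd_nonempty {K L : Set E} (hK : Convex ℝ K)
    (hKi : (interior K).Nonempty) (hL : Convex ℝ L) (hLi : (interior L).Nonempty) {x m : E}
    (hm : m ∈ K ∩ (x +ᵥ L)) (hm' : m ∈ interior K ∪ interior (x +ᵥ L)) :
    (interior K ∩ interior (x +ᵥ L)).Nonempty := by
  rcases hm' with hmK | hmL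
  · exact (hL.vadd x).inter_interior_nonempty_of_mem (by rw [interior_vadd]; exact hLi.vadd_set)
      isOpen_interior hm.2 hmK
  · rw [inter_comm]
    exact hK.inter_interior_nonempty_of_mem hKi isOpen_interior hm.1 hmL

theorem Convex.measure_lt_of_isClosed_subset [MeasurableSpace E] [OpensMeasurableSpace E]
    (μ : Measure E) [μ.IsOpenPosMeasure] {C M : Set E} (hC : Convex ℝ C)
    (hCi : (interior C).Nonempty) (hM : IsClosed M) (hMfin : μ M ≠ ⊤) (hMC : M ⊆ C) {p : E}
    (hpC : p ∈ C) (hpM : p ∉ M) : μ M < μ C := by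
  have hU : IsOpen (Mᶜ ∩ interior C) := hM.isOpen_compl.inter isOpen_interior
  calc μ M < μ M + μ (Mᶜ ∩ interior C) :=
        ENNReal.lt_add_right hMfin (hU.measure_pos μ (hC.inter_interior_nonempty_of_mem hCi
          hM.isOpen_compl hpC hpM)).ne'
    _ = μ (M ∪ (Mᶜ ∩ interior C)) :=
        (measure_union (disjoint_compl_right.mono_right inter_subset_left) hU.measurableSet).symm
    _ ≤ μ C := measure_mono (union_subset hMC (inter_subset_right.trans interior_subset))

theorem Convex.smul_inter_vadd_add_smul_inter_vadd_subset {K L : Set E} (hK : Convex ℝ K)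
    (hL : Convex ℝ L) (x₀ x₁ : E) {a b : ℝ} (ha : 0 ≤ a) (hb : 0 ≤ b) (hab : a + b = 1) :
    a • (K ∩ (x₀ +ᵥ L)) + b • (K ∩ (x₁ +ᵥ L)) ⊆ K ∩ ((a • x₀ + b • x₁) +ᵥ L) := by
  rintro _ ⟨_, ⟨_, ⟨hk₀, l₀, hl₀, rfl⟩, rfl⟩, _, ⟨_, ⟨hk₁, l₁, hl₁, rfl⟩, rfl⟩, rfl⟩
  refine ⟨hK hk₀ hk₁ ha hb hab, a • l₀ + b • l₁, hL hl₀ hl₁ ha hb hab, ?_⟩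
  simp only [vadd_eq_add]
  module

theorem StrictConvex.smul_inter_vadd_add_smul_inter_vadd_subset {K L : Set E}
    (hK : StrictConvex ℝ K) (hL : StrictConvex ℝ L) {x₀ x₁ : E} (hx : x₀ ≠ x₁) {a b : ℝ}
    (ha : 0 < a) (hb : 0 < b) (hab : a + b = 1) :
    a • (K ∩ (x₀ +ᵥ L)) + b • (K ∩ (x₁ +ᵥ L)) ⊆ interior K ∪ interior ((a • x₀ + b • x₁) +ᵥ L) := by
  rintro _ ⟨_, ⟨_, ⟨hk₀, l₀, hl₀, rfl⟩, rfl⟩, _, ⟨_, ⟨hk₁, l₁, hl₁, rfl⟩, rfl⟩, rfl⟩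
  rcases eq_or_ne l₀ l₁ with rfl | hl
  · exact Or.inl (hK hk₀ hk₁ (by simpa [vadd_eq_add] using hx) ha hb hab)
  · refine Or.inr ?_
    rw [interior_vadd]
    refine ⟨a • l₀ + b • l₁, hL hl₀ hl₁ hl ha hb hab, ?_⟩
    simp only [vadd_eq_add]
    module

theorem frontier_inter_frontier_nonempty_of_strictConcaveOn [MeasurableSpace E]
    (hE : 1 < Module.rank ℝ E) (μ : Measure E) [μ.IsAddLeftInvariant] {K L : Set E}
    (hKc : IsCompact K) (hK : Convex ℝ K) (hKi : (interior K).Nonempty) (hKs : K = -K)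
    (hLc : IsCompact L) (hL : Convex ℝ L) (hLi : (interior L).Nonempty) (hLs : L = -L)
    {φ : ℝ≥0∞ → ℝ}
    (hf : StrictConcaveOn ℝ (K + -L) fun x => φ (μ (K ∩ (x +ᵥ L)))) :
    (frontier K ∩ frontier L).Nonempty := by
  have : Nontrivial E := rank_pos_iff_nontrivial.1 (zero_lt_one.trans hE)
  have h0K := hK.zero_mem_interior_of_eq_neg hKs hKi
  have h0L := hL.zero_mem_interior_of_eq_neg hLs hLi
  have hS : K + -L ∈ 𝓝 0 :=
    mem_of_superset (isOpen_interior.add_right.mem_nhds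
      ⟨0, h0K, 0, by simpa using interior_subset h0L, add_zero 0⟩)
      (add_subset_add_right interior_subset)
  by_contra hKL
  refine hf.not_eventually_eq hS ?_
  have hdisj := disjoint_iff_inter_eq_empty.2 (not_nonempty_iff_eq_empty.1 hKL)
  filter_upwards [eventually_measure_inter_vadd_eq μ hKc hLc
    (subset_interior_or_subset_interior_of_disjoint_frontier hE hK hL hKc.isBounded h0K h0L
      hdisj)] with y hy
  rw [hy, zero_vadd]

theorem strictConcaveOn_toReal_measure_inter_vadd_rpow [FiniteDimensional ℝ E] [MeasurableSpace E]
    [BorelSpace E] {μ : Measure E} [μ.IsAddHaarMeasure] (hμ : SatisfiesBrunnMinkowski μ)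
    (hE : 1 < Module.rank ℝ E) {K L : Set E} (hKc : IsCompact K) (hKi : (interior K).Nonempty)
    (hK : StrictConvex ℝ K) (hKs : K = -K) (hLc : IsCompact L) (hLi : (interior L).Nonempty)
    (hL : StrictConvex ℝ L) (hLs : L = -L) (hKL : (frontier K ∩ frontier L).Nonempty) :
    StrictConcaveOn ℝ (K + -L)
      fun x => (μ (K ∩ (x +ᵥ L))).toReal ^ (Module.finrank ℝ E : ℝ)⁻¹ := by
  refine ⟨hK.convex.add hL.convex.neg, fun x₀ hx₀ x₁ hx₁ hx a b ha hb hab => ?_⟩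
  have hslice (y : E) : IsCompact (K ∩ (y +ᵥ L)) := hKc.inter_right (hLc.vadd y).isClosed
  have hslice' (y : E) : Convex ℝ (K ∩ (y +ᵥ L)) := hK.convex.inter (hL.convex.vadd y)
  set x := a • x₀ + b • x₁
  set M := a • (K ∩ (x₀ +ᵥ L)) + b • (K ∩ (x₁ +ᵥ L))
  have hM : IsCompact M := ((hslice x₀).smul a).add ((hslice x₁).smul b)
  have hMC : M ⊆ K ∩ (x +ᵥ L) :=
    hK.convex.smul_inter_vadd_add_smul_inter_vadd_subset hL.convex x₀ x₁ ha.le hb.le hab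
  have hMint : M ⊆ interior K ∪ interior (x +ᵥ L) :=
    hK.smul_inter_vadd_add_smul_inter_vadd_subset hL hx ha hb hab
  have hx₀' := mem_add_neg_iff_inter_vadd_nonempty.1 hx₀
  have hx₁' := mem_add_neg_iff_inter_vadd_nonempty.1 hx₁
  obtain ⟨m, hm⟩ : M.Nonempty := hx₀'.smul_set.add hx₁'.smul_set
  obtain ⟨z, hzK, hzL⟩ := interior_inter_interior_vadd_nonempty hK.convex hKi hL.convex hLi
    (hMC hm) (hMint hm)
  obtain ⟨p, hpK, hpL⟩ := frontier_inter_frontier_vadd_nonempty hE hKc hK.convex hKs hLc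
    hL.convex hLs hKL hzK hzL
  have hpM : p ∉ M := fun hpM => (hMint hpM).elim
    (disjoint_interior_frontier.ne_of_mem · hpK rfl)
    (disjoint_interior_frontier.ne_of_mem · hpL rfl)
  have hlt : μ M < μ (K ∩ (x +ᵥ L)) := (hslice' x).measure_lt_of_isClosed_subset μ
    ⟨z, by rw [interior_inter]; exact ⟨hzK, hzL⟩⟩ hM.isClosed hM.measure_lt_top.ne hMC
    ⟨hKc.isClosed.frontier_subset hpK, (hLc.vadd x).isClosed.frontier_subset hpL⟩ hpM
  have hn : 0 < Module.finrank ℝ E := by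
    rw [← Module.finrank_eq_rank] at hE
    exact_mod_cast zero_lt_one.trans hE
  rw [smul_eq_mul, smul_eq_mul]
  calc _ ≤ (μ M).toReal ^ (Module.finrank ℝ E : ℝ)⁻¹ :=
        hμ.add_rpow_inv_finrank_le (hslice x₀) (hslice x₁) (hslice' x₀) (hslice' x₁) hx₀' hx₁'
          ha hb hab
    _ < _ := Real.rpow_lt_rpow ENNReal.toReal_nonneg
        ((ENNReal.toReal_lt_toReal hM.measure_lt_top.ne (hslice x).measure_lt_top.ne).2 hlt)
        (by positivity)

end Covariogram

/-- Corollary 6.1: for origin-symmetric strictly convex bodies `K, L` in `ℝⁿ`, `n > 1`, the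
cross covariogram is strictly `1/n`-concave on its support if and only if
`∂K ∩ ∂L ≠ ∅`. -/
theorem strict_concavity_iff_boundaries_meet
    (n : ℕ) (hn : 1 < n)
    (K L : Set (EuclideanSpace ℝ (Fin n)))
    (hKcomp : IsCompact K) (hKconv : Convex ℝ K) (hKint : (interior K).Nonempty)
    (hKstrict : StrictConvex ℝ K) (hKsymm : K = -K)
    (hLcomp : IsCompact L) (hLconv : Convex ℝ L) (hLint : (interior L).Nonempty)
    (hLstrict : StrictConvex ℝ L) (hLsymm : L = -L)
    (g : EuclideanSpace ℝ (Fin n) → ℝ)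
    (hg : ∀ x, g x = (volume (K ∩ (x +ᵥ L))).toReal) :
    (∀ x₀ ∈ K + -L, ∀ x₁ ∈ K + -L, x₀ ≠ x₁ → ∀ t ∈ Ioo (0 : ℝ) 1,
        (1 - t) * g x₀ ^ (1 / (n : ℝ)) + t * g x₁ ^ (1 / (n : ℝ))
          < g ((1 - t) • x₀ + t • x₁) ^ (1 / (n : ℝ)))
      ↔ (frontier K ∩ frontier L).Nonempty := by
  obtain rfl : g = fun x => (volume (K ∩ (x +ᵥ L))).toReal := funext hg
  have hrank : 1 < Module.rank ℝ (EuclideanSpace ℝ (Fin n)) := by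
    rw [← Module.finrank_eq_rank, finrank_euclideanSpace_fin]
    exact_mod_cast hn
  refine (strictConcaveOn_iff_forall_Ioo (hKconv.add hLconv.neg)).symm.trans
    ⟨fun h => ?_, fun hKL => ?_⟩
  · exact frontier_inter_frontier_nonempty_of_strictConcaveOn hrank volume hKcomp hKconv hKint
      hKsymm hLcomp hLconv hLint hLsymm (φ := fun m => m.toReal ^ (1 / (n : ℝ))) h
  · simpa only [finrank_euclideanSpace_fin, one_div] using
      strictConcaveOn_toReal_measure_inter_vadd_rpow
        (satisfiesBrunnMinkowski_volume_euclideanSpace n) hrank hKcomp hKint hKstrict hKsymm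
        hLcomp hLint hLstrict hLsymm hKL
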